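/- arXiv:1410.7184 — 3 statements merged into one kernel-verified Lean document; each statement's English description precedes it below -/
import Mathlib

section
/- Let q be an odd prime power, m a positive integer, U a k-dimensional F_q-subspace of V = F_{q^m}, ℓ an integer, and s a positive integer coprime to m. Then every F_q-bilinear form B: U × V → F_q can be written uniquely as B(x,y) = Tr(Σ_{j=0}^{k-1} a_j · y · x^{q^{s(j-ℓ)}}) for some a_0, a_1, …, a_{k-1} ∈ F_{q^m}, where Tr: F_{q^m} → F_q is the field trace. -/
/-!
Let `ψ` be the Frobenius of `K/F`, `τ = ψ^s` and `ρ = ψ^(-sℓ)`, so that `ψ^(s(j-ℓ)) = τ^j ρ`.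
As `gcd(s, m) = 1`, `τ` generates `Gal(K/F)`, so its fixed field is `F`. For such a `τ`, an
operator `∑_{j<n} a_j τ^j` that vanishes on an `n`-dimensional `F`-subspace is zero: rescale so
that the subspace contains `1`; then the coefficients add up to `0`, the operator factors as
`(∑_i b_i τ^i) ∘ (τ - 1)`, and `τ - 1` has kernel `F`, which lets one induct on `n`. Hence the
`k` maps `x ↦ τ^j (ρ x)` on `U` are `K`-linearly independent in `Hom_F(U, K)`, which has
`K`-dimension `k`, and the nondegenerate trace form identifies `Hom_F(U, K)` with the
`F`-bilinear forms on `U × K`.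
-/

open Module Finset

theorem Submodule.finrank_le_finrank_map_add_finrank_ker {F M N : Type*} [Field F]
    [AddCommGroup M] [Module F M] [AddCommGroup N] [Module F N]
    (W : Submodule F M) [FiniteDimensional F W] (f : M →ₗ[F] N)
    [FiniteDimensional F (LinearMap.ker f)] :
    finrank F W ≤ finrank F (W.map f) + finrank F (LinearMap.ker f) := by
  rw [← (f.domRestrict W).finrank_range_add_finrank_ker, LinearMap.range_domRestrict]
  gcongr
  exact LinearMap.finrank_le_finrank_of_injective
    (f := W.subtype.restrict (p := LinearMap.ker (f.domRestrict W)) fun _ hx => hx)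
    fun x y hxy => Subtype.ext (Subtype.ext (congrArg Subtype.val hxy :))

section

variable {F K : Type*} [Field F] [Field K] [Algebra F K]

namespace AlgEquiv

variable (τ : K ≃ₐ[F] K)

theorem pow_apply_sub_self (y : K) (j : ℕ) :
    (τ ^ j) y - y = ∑ i ∈ range j, (τ ^ i) (τ y - y) := by
  have htel := sum_range_sub (fun i => (τ ^ i) y) j
  rw [pow_zero, one_apply] at htel
  rw [← htel]
  refine sum_congr rfl fun i _ => ?_
  rw [pow_succ, mul_apply, map_sub]

theorem sum_mul_pow_apply_eq_sum_mul_pow_apply_sub_self (a : ℕ → K) (n : ℕ) (y : K) :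
    ∑ j ∈ range (n + 1), a j * (τ ^ j) y =
      ∑ i ∈ range n, (∑ j ∈ Ico (i + 1) (n + 1), a j) * (τ ^ i) (τ y - y) +
        (∑ j ∈ range (n + 1), a j) * y := by
  calc ∑ j ∈ range (n + 1), a j * (τ ^ j) y
      = ∑ j ∈ range (n + 1), a j * ((τ ^ j) y - y) + (∑ j ∈ range (n + 1), a j) * y := by
        rw [sum_mul, ← sum_add_distrib]
        simp only [mul_sub, sub_add_cancel]
    _ = ∑ j ∈ Ico 0 (n + 1), ∑ i ∈ Ico 0 j, a j * (τ ^ i) (τ y - y) +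
          (∑ j ∈ range (n + 1), a j) * y := by
        simp only [pow_apply_sub_self, mul_sum, range_eq_Ico]
    _ = _ := by
        rw [← sum_Ico_Ico_comm', ← range_eq_Ico, sum_range_succ, Ico_self, sum_empty, add_zero]
        simp only [sum_mul]

variable {τ}

theorem ker_toLinearMap_sub_id_le_span_one (hτ : ∀ x, τ x = x → x ∈ Set.range (algebraMap F K)) :
    LinearMap.ker (τ.toLinearMap - LinearMap.id) ≤ Submodule.span F {1} := by
  intro x hx
  obtain ⟨r, rfl⟩ := hτ x (sub_eq_zero.mp hx)
  exact Submodule.mem_span_singleton.mpr ⟨r, (Algebra.algebraMap_eq_smul_one r).symm⟩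

theorem finrank_le_finrank_map_toLinearMap_sub_id_add_one
    (hτ : ∀ x, τ x = x → x ∈ Set.range (algebraMap F K)) (W : Submodule F K)
    [FiniteDimensional F W] :
    finrank F W ≤ finrank F (W.map (τ.toLinearMap - LinearMap.id)) + 1 := by
  have hker := ker_toLinearMap_sub_id_le_span_one hτ
  have : FiniteDimensional F (LinearMap.ker (τ.toLinearMap - LinearMap.id)) :=
    Submodule.finiteDimensional_of_le hker
  have hker_rank := (Submodule.finrank_mono hker).trans_eq (finrank_span_singleton one_ne_zero)
  have := W.finrank_le_finrank_map_add_finrank_ker (τ.toLinearMap - LinearMap.id)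
  omega

theorem eq_zero_of_sum_mul_pow_apply_eq_zero
    (hτ : ∀ x, τ x = x → x ∈ Set.range (algebraMap F K)) {n : ℕ} {W : Submodule F K}
    (hW : n ≤ finrank F W) {a : ℕ → K} (ha : ∀ w ∈ W, ∑ j ∈ range n, a j * (τ ^ j) w = 0) :
    ∀ j < n, a j = 0 := by
  induction n generalizing W a with
  | zero => simp
  | succ n ih =>
    have : FiniteDimensional F W := Module.finite_of_finrank_pos (by omega)
    obtain ⟨u, huW, hu⟩ := Submodule.exists_mem_ne_zero_of_ne_bot (p := W) fun h => by
      rw [h, finrank_bot] at hW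
      omega
    -- Rescaling `W` by `u⁻¹` puts `1` in it, so that the coefficients of the rescaled sum add up
    -- to zero and it factors through `τ - 1`.
    set a' : ℕ → K := fun j => a j * (τ ^ j) u
    set W' := W.map (LinearMap.mulLeft F u⁻¹)
    let eW : W ≃ₗ[F] W' :=
      Submodule.equivMapOfInjective _ (mul_right_injective₀ (inv_ne_zero hu)) W
    have : FiniteDimensional F W' := eW.finiteDimensional
    have ha' : ∀ y ∈ W', ∑ j ∈ range (n + 1), a' j * (τ ^ j) y = 0 := by
      rintro _ ⟨w, hw, rfl⟩
      refine (sum_congr rfl fun j _ => ?_).trans (ha w hw)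
      rw [LinearMap.mulLeft_apply, mul_assoc, ← map_mul, mul_inv_cancel_left₀ hu]
    have hsum : ∑ j ∈ range (n + 1), a' j = 0 := by
      simpa using ha' 1 ⟨u, huW, inv_mul_cancel₀ hu⟩
    have htail : ∀ i, ∑ j ∈ Ico (i + 1) (n + 1), a' j = 0 := by
      intro i
      rcases lt_or_ge i n with hi | hi
      · refine ih (W := W'.map (τ.toLinearMap - LinearMap.id))
          (a := fun i => ∑ j ∈ Ico (i + 1) (n + 1), a' j) ?_ ?_ i hi
        · have := finrank_le_finrank_map_toLinearMap_sub_id_add_one hτ W'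
          have := eW.finrank_eq
          omega
        · rintro _ ⟨y, hy, rfl⟩
          have := sum_mul_pow_apply_eq_sum_mul_pow_apply_sub_self τ a' n y
          rw [ha' y hy, hsum, zero_mul, add_zero] at this
          exact this.symm
      · rw [Ico_eq_empty_of_le (by omega), sum_empty]
    intro j hj
    have htail_j : ∑ i ∈ Ico j (n + 1), a' i = 0 := by
      rcases j with _ | j
      · rwa [← range_eq_Ico]
      · exact htail j
    rw [sum_eq_sum_Ico_succ_bot hj, htail j, add_zero] at htail_j
    exact (mul_eq_zero.mp htail_j).resolve_right ((map_ne_zero _).mpr hu)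

theorem linearIndependent_pow_mul_comp_subtype
    (hτ : ∀ x, τ x = x → x ∈ Set.range (algebraMap F K)) (ρ : K ≃ₐ[F] K) {U : Submodule F K}
    {k : ℕ} (hk : k ≤ finrank F U) :
    LinearIndependent K fun j : Fin k => (τ ^ (j : ℕ) * ρ).toLinearMap ∘ₗ U.subtype := by
  rw [Fintype.linearIndependent_iff]
  intro g hg i
  let a : ℕ → K := fun j => if h : j < k then g ⟨j, h⟩ else 0
  have hW : k ≤ finrank F (U.map ρ.toLinearMap) := by
    rwa [← AlgEquiv.toLinearEquiv_toLinearMap, LinearEquiv.finrank_map_eq]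
  have := eq_zero_of_sum_mul_pow_apply_eq_zero hτ hW (a := a) ?_ i i.2
  · simpa [a] using this
  rintro _ ⟨x, hx, rfl⟩
  rw [AlgEquiv.toLinearMap_apply, ← Fin.sum_univ_eq_sum_range (fun j => a j * (τ ^ j) (ρ x))]
  simpa [a] using LinearMap.congr_fun hg ⟨x, hx⟩

end AlgEquiv

theorem existsUnique_eq_trace_sum_mul {U : Type*} [AddCommGroup U] [Module F U]
    [FiniteDimensional F K] [Algebra.IsSeparable F K] [FiniteDimensional F U] {k : ℕ}
    (hU : finrank F U = k) (v : Fin k → U →ₗ[F] K) (hv : LinearIndependent K v)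
    (B : U →ₗ[F] K →ₗ[F] F) :
    ∃! a : Fin k → K, ∀ x y, B x y = Algebra.trace F K (∑ j, a j * y * v j x) := by
  let e := (Algebra.traceForm F K).toDual (traceForm_nondegenerate F K)
  let Θ : (Fin k → K) →ₗ[F] U →ₗ[F] Module.Dual F K :=
    e.congrRight.toLinearMap ∘ₗ (Fintype.linearCombination K v).restrictScalars F
  have hinj : Function.Injective Θ :=
    e.congrRight.injective.comp hv.fintypeLinearCombination_injective
  have hdim : finrank F (Fin k → K) = finrank F (U →ₗ[F] Module.Dual F K) := by
    simp [finrank_linearMap, Module.finrank_pi_fintype, hU]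
  have hbij : Function.Bijective Θ :=
    (LinearMap.linearEquivOfInjective (V₂ := U →ₗ[F] Module.Dual F K) Θ hinj hdim).bijective
  have hΘ : ∀ a x y, Θ a x y = Algebra.trace F K (∑ j, a j * y * v j x) := fun a x y => by
    change e (Fintype.linearCombination K v a x) y = _
    rw [LinearMap.BilinForm.toDual_def, Algebra.traceForm_apply, Fintype.linearCombination_apply,
      LinearMap.sum_apply, sum_mul]
    simp only [LinearMap.smul_apply, smul_eq_mul, mul_right_comm]
  refine (existsUnique_congr fun a => ?_).mp (hbij.existsUnique B)
  simp only [eq_comm (a := Θ a), LinearMap.ext_iff₂, hΘ]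

section FiniteField

variable [Fintype F] [Finite K]

theorem FiniteField.mem_range_algebraMap_of_frobenius_pow_apply_eq {s : ℕ}
    (hs : s.Coprime (finrank F K)) {x : K}
    (hx : (FiniteField.frobeniusAlgEquivOfAlgebraic F K ^ s) x = x) :
    x ∈ Set.range (algebraMap F K) := by
  set ψ := FiniteField.frobeniusAlgEquivOfAlgebraic F K
  have htop : Subgroup.zpowers (ψ ^ s) = ⊤ := by
    refine Subgroup.eq_top_of_card_eq _ ?_
    rw [Nat.card_zpowers, Nat.Coprime.orderOf_pow, FiniteField.orderOf_frobeniusAlgEquivOfAlgebraic,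
      IsGalois.card_aut_eq_finrank]
    rwa [FiniteField.orderOf_frobeniusAlgEquivOfAlgebraic, Nat.coprime_comm]
  have hfix : Subgroup.zpowers (ψ ^ s) ≤ MulAction.stabilizer Gal(K/F) x :=
    Subgroup.zpowers_le.mpr hx
  rw [IsGalois.mem_range_algebraMap_iff_fixed]
  intro f
  exact hfix (htop ▸ Subgroup.mem_top f)

end FiniteField

end

theorem bilinear_form_trace_representation_general (q m k s : ℕ) (ℓ : ℤ)
    (F K : Type*) [Field F] [Field K] [Fintype F] [Fintype K] [Algebra F K]
    (hF : Fintype.card F = q)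
    (hm : Module.finrank F K = m) (hsm : Nat.gcd s m = 1)
    (φ : K ≃+* K) (hφ : ∀ x : K, φ x = x ^ q)
    (U : Submodule F K) (hU : Module.finrank F U = k)
    (B : U →ₗ[F] K →ₗ[F] F) :
    ∃! a : Fin k → K, ∀ (x : U) (y : K),
      B x y = Algebra.trace F K
        (∑ j : Fin k, a j * y * (φ ^ ((s : ℤ) * (((j : ℕ) : ℤ) - ℓ))) (x : K)) := by
  set ψ := FiniteField.frobeniusAlgEquivOfAlgebraic F K
  have hψφ : MulSemiringAction.toRingEquiv _ K ψ = φ := by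
    ext x
    rw [hφ, ← hF]
    rfl
  have hφ_zpow : ∀ (z : ℤ) (x : K), (φ ^ z) x = (ψ ^ z) x := fun z x => by
    rw [← hψφ, ← map_zpow]
    rfl
  have hτ (x : K) : (ψ ^ s) x = x → x ∈ Set.range (algebraMap F K) :=
    FiniteField.mem_range_algebraMap_of_frobenius_pow_apply_eq (hm ▸ hsm)
  have hv := AlgEquiv.linearIndependent_pow_mul_comp_subtype hτ (ψ ^ (-(s * ℓ))) hU.ge
  refine (existsUnique_congr fun a => forall₂_congr fun x y => ?_).mp
    (existsUnique_eq_trace_sum_mul hU _ hv B)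
  have hexp (j : ℕ) : (ψ ^ s) ^ j * ψ ^ (-(s * ℓ)) = ψ ^ ((s : ℤ) * ((j : ℤ) - ℓ)) := by
    group
  simp only [LinearMap.coe_comp, Function.comp_apply, Submodule.coe_subtype,
    AlgEquiv.toLinearMap_apply, hexp, hφ_zpow]

/-- Let `q` be an odd prime power, `U` a `k`-dimensional `F_q`-subspace of
`V = F_{q^m}`, `ℓ` an integer, and `s` a positive integer coprime to `m`. Then every
`F_q`-bilinear form `B : U × V → F_q` can be written uniquely as
`B(x,y) = Tr(∑_{j=0}^{k-1} a_j · y · x^{q^{s(j-ℓ)}})` with `a_0, …, a_{k-1} ∈ F_{q^m}`,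
where `Tr` is the field trace of `F_{q^m}/F_q` and the (possibly negative) powers of the
Frobenius `φ : x ↦ x^q` are interpreted in the automorphism group. -/
theorem bilinear_form_trace_representation (q m k s : ℕ) (ℓ : ℤ)
    (F K : Type*) [Field F] [Field K] [Fintype F] [Fintype K] [Algebra F K]
    (hF : Fintype.card F = q) (hodd : Odd q)
    (hm : Module.finrank F K = m) (hs : 0 < s) (hsm : Nat.gcd s m = 1)
    (φ : K ≃+* K) (hφ : ∀ x : K, φ x = x ^ q)
    (U : Submodule F K) (hU : Module.finrank F U = k)
    (B : U →ₗ[F] K →ₗ[F] F) :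
    ∃! a : Fin k → K, ∀ (x : U) (y : K),
      B x y = Algebra.trace F K
        (∑ j : Fin k, a j * y * (φ ^ ((s : ℤ) * (((j : ℕ) : ℤ) - ℓ))) (x : K)) :=
  bilinear_form_trace_representation_general q m k s ℓ F K hF hm hsm φ hφ U hU B
end

section
/- Let q be an odd prime power, m, s, t as above with gcd(s,m)=1 and 0 ≤ t ≤ (m-1)/2. The map λ ↦ B_λ from F_{q^m}^{t+1} to symmetric bilinear forms on F_{q^m} over F_q is injective; consequently the set Y_s(t,m,q) = {B_λ : λ ∈ F_{q^m}^{t+1}} has exactly q^{m(t+1)} elements. -/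
/-- The symmetric bilinear form
`B_λ(x,y) = Tr(λ_0 x y + ∑_{j=1}^{t} λ_j (x^{q^{sj}} y + x y^{q^{sj}}))` on `F_{q^m}`
over `F_q`, where `Tr` is the field trace. -/
noncomputable def Bform (F K : Type*) [Field F] [Field K] [Algebra F K]
    (q s t : ℕ) (l : Fin (t + 1) → K) (x y : K) : F :=
  Algebra.trace F K
    (l 0 * (x * y) +
      ∑ j ∈ Finset.univ.filter (fun j : Fin (t + 1) => (j : ℕ) ≠ 0),
        l j * (x ^ (q ^ (s * (j : ℕ))) * y + x * y ^ (q ^ (s * (j : ℕ)))))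

/-!
Let `σ` be the Frobenius `x ↦ x^q` of `K/F`, of order `m`. Moving `σ^(s j)` across the trace
writes `B_λ(x, y) = Tr(L x * y)` with `L = λ₀ + ∑ⱼ (λⱼ σ^(s j) + σ^(-s j) ∘ λⱼ)`. If `B_λ = 0`,
nondegeneracy of the trace form gives `L = 0`. Since `gcd(s, m) = 1` and `2t < m`, the exponents
`s j` for `-t ≤ j ≤ t` are distinct modulo `m`, so the `2t + 1` automorphisms `σ^(s j)` are distinct
and Dedekind's independence of characters forces every coefficient, in particular every `λⱼ`, to
vanish. The map `λ ↦ B_λ` is additive, hence injective, and its image has `|K|^(t+1)` elements.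
-/

theorem Algebra.trace_symm_apply_mul {A B : Type*} [CommRing A] [CommRing B] [Algebra A B]
    (σ : B ≃ₐ[A] B) (x y : B) :
    Algebra.trace A B (σ.symm x * y) = Algebra.trace A B (x * σ y) := by
  rw [← Algebra.trace_eq_of_algEquiv σ, map_mul, AlgEquiv.apply_symm_apply]

theorem eq_of_zpow_mul_eq_of_coprime {G : Type*} [Group G] {g : G} {s t : ℕ}
    (hsm : s.Coprime (orderOf g)) (ht : 2 * t < orderOf g) {a b : ℤ}
    (ha : |a| ≤ t) (hb : |b| ≤ t) (h : g ^ (s * a) = g ^ (s * b)) : a = b := by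
  rw [zpow_eq_zpow_iff_modEq, Int.modEq_iff_dvd, ← mul_sub] at h
  have hdvd : (orderOf g : ℤ) ∣ b - a :=
    (Nat.isCoprime_iff_coprime.2 hsm.symm).dvd_of_dvd_mul_left h
  have hlt : |b - a| < orderOf g := by
    rw [abs_le] at ha hb
    rw [abs_lt]
    constructor <;> omega
  have := Int.eq_zero_of_abs_lt_dvd hdvd hlt
  omega

theorem eq_zero_of_forall_sum_mul_algEquiv_apply_eq_zero {F K ι : Type*} [Field F] [Field K]
    [Algebra F K] [Fintype ι] {g : ι → K ≃ₐ[F] K} (hg : Function.Injective g) {c : ι → K}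
    (h : ∀ x, ∑ i, c i * g i x = 0) : c = 0 := by
  have hind := (linearIndependent_monoidHom K K).comp (fun i => ((g i : K ≃* K) : K →* K))
    fun i j hij => hg <| AlgEquiv.ext fun x => DFunLike.congr_fun hij x
  funext i
  exact Fintype.linearIndependent_iff.1 hind c
    (funext fun x => by simpa [Finset.sum_apply] using! h x) i

theorem Fin.sum_filter_val_ne_zero_eq_sum_succ {M : Type*} [AddCommMonoid M] {t : ℕ}
    (f : Fin (t + 1) → M) :
    ∑ j ∈ Finset.univ.filter (fun j : Fin (t + 1) => (j : ℕ) ≠ 0), f j =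
      ∑ i : Fin t, f i.succ := by
  rw [Finset.sum_filter, Fin.sum_univ_succ]
  simp

/-- `B_λ(x, y) = Tr(L x * y)` for an `F`-linear `L = ∑ cᵢ σ^(s eᵢ)` in the Frobenius `σ`;
this enumerates the exponents `eᵢ`, namely `0, 1, …, t` and `-1, …, -t`. -/
def frobeniusExponent {t : ℕ} : Fin (t + 1) ⊕ Fin t → ℤ
  | .inl j => j
  | .inr i => -((i : ℤ) + 1)

theorem frobeniusExponent_injective {t : ℕ} :
    Function.Injective (frobeniusExponent (t := t)) := by
  rintro (j | i) (j' | i') h <;> simp only [frobeniusExponent] at h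
  · exact congrArg _ (Fin.ext (by exact_mod_cast h))
  · omega
  · omega
  · exact congrArg _ (Fin.ext (by omega))

theorem abs_frobeniusExponent_le {t : ℕ} (i : Fin (t + 1) ⊕ Fin t) :
    |frobeniusExponent i| ≤ t := by
  rcases i with j | i <;> simp only [frobeniusExponent, abs_le] <;> omega

section

variable {F K : Type*} [Field F] [Field K] [Algebra F K]

/-- The coefficient of `σ^(-s j)` is `σ^(-s j) (λ j)`, since `Tr(x σᵏ y) = Tr(σ⁻ᵏ x * y)`. -/
def BformCoeff (σ : K ≃ₐ[F] K) (s : ℕ) {t : ℕ} (l : Fin (t + 1) → K) :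
    Fin (t + 1) ⊕ Fin t → K
  | .inl j => l j
  | .inr i => (σ ^ (s * frobeniusExponent (.inr i : Fin (t + 1) ⊕ Fin t))) (l i.succ)

theorem Bform_eq_trace_sum_mul {q : ℕ} {σ : K ≃ₐ[F] K} (hσ : ⇑σ = (· ^ q)) (s t : ℕ)
    (l : Fin (t + 1) → K) (x y : K) :
    Bform F K q s t l x y = Algebra.trace F K
      ((∑ i, BformCoeff σ s l i * (σ ^ (s * frobeniusExponent i)) x) * y) := by
  have hpow : ∀ (n : ℕ) (z : K), (σ ^ ((s : ℤ) * n)) z = z ^ q ^ (s * n) := fun n z => by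
    rw [← Nat.cast_mul, zpow_natCast, AlgEquiv.coe_pow, hσ, pow_iterate]
  have hneg : ∀ i : Fin t, σ ^ (s * -((i : ℤ) + 1)) = (σ ^ ((s : ℤ) * (i.succ : ℕ))).symm :=
    fun i => by rw [mul_neg, zpow_neg, Fin.val_succ]; push_cast; rfl
  simp only [Bform, Fin.sum_filter_val_ne_zero_eq_sum_succ, Fintype.sum_sum_type,
    Fin.sum_univ_succ, BformCoeff, frobeniusExponent, hneg, ← map_mul, add_mul, Finset.sum_mul,
    map_add, map_sum, Algebra.trace_symm_apply_mul, hpow]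
  rw [add_assoc, ← Finset.sum_add_distrib]
  congr 1
  · simp [mul_assoc]
  · refine Finset.sum_congr rfl fun i _ => ?_
    rw [← map_add]
    ring_nf

theorem Bform_sub (q s t : ℕ) (l₁ l₂ : Fin (t + 1) → K) (x y : K) :
    Bform F K q s t (l₁ - l₂) x y = Bform F K q s t l₁ x y - Bform F K q s t l₂ x y := by
  simp only [Bform, Pi.sub_apply, sub_mul, Finset.sum_sub_distrib, ← map_sub]
  congr 1
  abel

theorem eq_zero_of_Bform_eq_zero [Fintype F] [Fintype K] {s t : ℕ}
    (hsm : s.Coprime (Module.finrank F K)) (ht : 2 * t + 1 ≤ Module.finrank F K)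
    {l : Fin (t + 1) → K} (h : ∀ x y, Bform F K (Fintype.card F) s t l x y = 0) : l = 0 := by
  set φ := FiniteField.frobeniusAlgEquivOfAlgebraic F K
  have horder : orderOf φ = Module.finrank F K :=
    FiniteField.orderOf_frobeniusAlgEquivOfAlgebraic F K
  have hL : ∀ x, ∑ i, BformCoeff φ s l i * (φ ^ (s * frobeniusExponent i)) x = 0 := fun x =>
    (traceForm_nondegenerate F K).1 _ fun y => by
      rw [Algebra.traceForm_apply, ← Bform_eq_trace_sum_mul rfl, h]
  have hinj : Function.Injective fun i => φ ^ (s * frobeniusExponent (t := t) i) :=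
    fun i j hij => frobeniusExponent_injective <|
      eq_of_zpow_mul_eq_of_coprime (horder ▸ hsm) (by omega)
        (abs_frobeniusExponent_le i) (abs_frobeniusExponent_le j) hij
  funext j
  exact congrFun (eq_zero_of_forall_sum_mul_algEquiv_apply_eq_zero hinj hL) (.inl j)

end

theorem Bform_injective_card_general (q m s t : ℕ)
    (F K : Type*) [Field F] [Field K] [Fintype F] [Fintype K] [Algebra F K]
    (hF : Fintype.card F = q)
    (hm : Module.finrank F K = m) (hsm : Nat.gcd s m = 1)
    (ht : 2 * t + 1 ≤ m) :
    Function.Injective (fun l : Fin (t + 1) → K => Bform F K q s t l) ∧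
      Set.ncard (Set.range (fun l : Fin (t + 1) → K => Bform F K q s t l))
        = q ^ (m * (t + 1)) := by
  subst hF hm
  have hinj : Function.Injective (fun l : Fin (t + 1) → K => Bform F K (Fintype.card F) s t l) :=
    fun l₁ l₂ h => sub_eq_zero.1 <| eq_zero_of_Bform_eq_zero hsm ht fun x y => by
      rw [Bform_sub, sub_eq_zero]
      exact congrFun (congrFun h x) y
  refine ⟨hinj, ?_⟩
  rw [← Set.image_univ, Set.ncard_image_of_injective _ hinj, Set.ncard_univ,
    Nat.card_eq_fintype_card, Fintype.card_fun, Fintype.card_fin,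
    Module.card_eq_pow_finrank (K := F) (V := K), ← pow_mul]

/-- Let `q` be an odd prime power, `gcd(s,m) = 1`, `0 ≤ t ≤ (m-1)/2`.
The map `λ ↦ B_λ` from `F_{q^m}^{t+1}` to symmetric bilinear forms on `F_{q^m}` over `F_q`
is injective; consequently `Y_s(t,m,q) = {B_λ : λ}` has exactly `q^{m(t+1)}` elements. -/
theorem Bform_injective_card (q m s t : ℕ)
    (F K : Type*) [Field F] [Field K] [Fintype F] [Fintype K] [Algebra F K]
    (hF : Fintype.card F = q) (hodd : Odd q)
    (hm : Module.finrank F K = m) (hs : 0 < s) (hsm : Nat.gcd s m = 1)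
    (ht : 2 * t + 1 ≤ m) :
    Function.Injective (fun l : Fin (t + 1) → K => Bform F K q s t l) ∧
      Set.ncard (Set.range (fun l : Fin (t + 1) → K => Bform F K q s t l))
        = q ^ (m * (t + 1)) :=
  Bform_injective_card_general q m s t F K hF hm hsm ht
end

section
/- Let q be an odd prime power and let Q: V → F_q be a quadratic form of odd rank i ≥ 1 on an m-dimensional F_q-vector space V. Then the number of x ∈ V \ {0} with Q(x) ≠ 0 (the Hamming weight of the codeword associated to Q) equals q^{m-1}(q-1). -/
/-!
Diagonalise `Q ≅ ∑ wⱼ xⱼ²`; the radical is spanned by the coordinates with `wⱼ = 0`, so the rank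
`r` is the number of nonzero weights. For a primitive additive character `ψ`, orthogonality gives
`q · #{Q = 0} = ∑ₜ ∑ₓ ψ(t Q(x))`. For `t ≠ 0` the inner sum factors over the coordinates, and
substituting `s² = u` turns each factor with `wⱼ ≠ 0` into a quadratic Gauss sum, which depends on
`t` only through the factor `χ(t)` of the quadratic character `χ`. So the inner sum is
`χ(t)ʳ = χ(t)` (as `r` is odd) times a constant, and `∑_{t ≠ 0} χ(t) = 0` leaves only the term
`t = 0`, i.e. `q · #{Q = 0} = qᵐ`. As `Q 0 = 0`, the weight is `qᵐ - qᵐ⁻¹`.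
-/

open Finset QuadraticMap

lemma AddChar.map_sum_eq_prod {A M ι : Type*} [AddCommMonoid A] [CommMonoid M]
    (ψ : AddChar A M) (s : Finset ι) (f : ι → A) :
    ψ (∑ i ∈ s, f i) = ∏ i ∈ s, ψ (f i) := by
  induction s using Finset.cons_induction with
  | empty => simp
  | cons a s _ ih => rw [sum_cons, prod_cons, ψ.map_add_eq_mul, ih]

section CharacterSums

variable {F : Type*} [Field F] [Fintype F] [DecidableEq F]
  {R : Type*} [CommRing R] [IsDomain R] {ψ : AddChar F R}

lemma card_filter_eq_zero_mul_card_eq_sum_addChar (hψ : ψ.IsPrimitive)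
    {X : Type*} [Fintype X] (f : X → F) :
    (#{x | f x = 0} * Fintype.card F : R) = ∑ t : F, ∑ x, ψ (t * f x) := by
  rw [sum_comm]
  simp_rw [AddChar.sum_mulShift _ hψ]
  rw [← Nat.cast_mul, ← Nat.cast_sum, sum_ite, sum_const_zero, add_zero, sum_const, smul_eq_mul]

lemma sum_addChar_mul_sq_eq_gaussSum (hF : ringChar F ≠ 2) (hψ : ψ.IsPrimitive) {a : F}
    (ha : a ≠ 0) :
    ∑ s, ψ (a * s ^ 2) =
      gaussSum ((quadraticChar F).ringHomComp (Int.castRingHom R)) (ψ.mulShift a) := by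
  set η := (quadraticChar F).ringHomComp (Int.castRingHom R)
  have hsqrts (u : F) : (#{s | s ^ 2 = u} : R) = η u + 1 := by
    have h := congrArg (Int.cast : ℤ → R) (quadraticChar_card_sqrts hF u)
    rw [Set.toFinset_ofPred] at h
    push_cast at h
    rw [MulChar.ringHomComp_apply, eq_intCast]
    convert h using 3
  calc ∑ s, ψ (a * s ^ 2)
      = ∑ u, ∑ s with s ^ 2 = u, ψ (a * s ^ 2) := (sum_fiberwise _ _ _).symm
    _ = ∑ u, (η u + 1) * ψ (a * u) := by
        refine sum_congr rfl fun u _ => ?_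
        rw [sum_congr rfl fun s hs => by rw [(mem_filter.mp hs).2], sum_const, nsmul_eq_mul,
          hsqrts]
    _ = gaussSum η (ψ.mulShift a) + ∑ u, ψ (a * u) := by
        simp only [add_mul, one_mul, sum_add_distrib, gaussSum, AddChar.mulShift_apply]
    _ = gaussSum η (ψ.mulShift a) := by
        simpa [mul_comm, ha] using AddChar.sum_mulShift a hψ

lemma sum_addChar_mul_sq (hF : ringChar F ≠ 2) (hψ : ψ.IsPrimitive) {a : F} (ha : a ≠ 0) :
    ∑ s, ψ (a * s ^ 2) = quadraticChar F a * ∑ s, ψ (s ^ 2) := by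
  have h1 := sum_addChar_mul_sq_eq_gaussSum hF hψ one_ne_zero
  simp only [one_mul, AddChar.mulShift_one] at h1
  rw [sum_addChar_mul_sq_eq_gaussSum hF hψ ha, h1, ← Units.val_mk0 ha, gaussSum_mulShift_eq,
    ((quadraticChar_isQuadratic F).comp _).inv]
  simp

lemma sum_addChar_mul_weightedSumSquares (hF : ringChar F ≠ 2) (hψ : ψ.IsPrimitive)
    {ι : Type*} [Fintype ι] [DecidableEq ι] (w : ι → F) {t : F} (ht : t ≠ 0) :
    ∑ x, ψ (t * weightedSumSquares F w x) =
      (quadraticChar F t : R) ^ #{j | w j ≠ 0} * ∑ x, ψ (weightedSumSquares F w x) := by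
  have hprod (c : F) : ∑ x, ψ (c * weightedSumSquares F w x) =
      ∏ j, ∑ s, ψ (c * w j * s ^ 2) := by
    simp only [weightedSumSquares_apply, smul_eq_mul, mul_sum,
      AddChar.map_sum_eq_prod, Fintype.prod_sum, mul_assoc, _root_.sq]
  have hcoord (j : ι) : ∑ s, ψ (t * w j * s ^ 2) =
      (if w j ≠ 0 then (quadraticChar F t : R) else 1) * ∑ s, ψ (w j * s ^ 2) := by
    split_ifs with hw
    · rw [sum_addChar_mul_sq hF hψ (mul_ne_zero ht hw), sum_addChar_mul_sq hF hψ hw, map_mul]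
      push_cast
      ring
    · simp [not_not.mp hw]
  have h1 := hprod 1
  simp only [one_mul] at h1
  rw [hprod, h1, ← prod_const, prod_filter, ← prod_mul_distrib]
  exact prod_congr rfl fun j _ => hcoord j

end CharacterSums

lemma card_filter_weightedSumSquares_eq_zero {F : Type*} [Field F] [Fintype F] [DecidableEq F]
    (hF : ringChar F ≠ 2) {ι : Type*} [Fintype ι] [DecidableEq ι] (w : ι → F)
    (hw : Odd #{j | w j ≠ 0}) :
    #{x | weightedSumSquares F w x = 0} = Fintype.card F ^ (Fintype.card ι - 1) := by
  set Q := weightedSumSquares F w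
  set q := Fintype.card F
  have hchar : ringChar ℂ ≠ ringChar F := by
    rw [ringChar.eq_zero]
    exact (CharP.char_is_prime F _).ne_zero.symm
  obtain ⟨n, ψ, hψ⟩ := AddChar.FiniteField.primitiveChar F ℂ hchar
  have hsum : ∑ t ∈ univ.erase 0, (quadraticChar F t : CyclotomicField n ℂ) = 0 := by
    rw [sum_erase _ (by simp), ← Int.cast_sum, quadraticChar_sum_zero hF, Int.cast_zero]
  have hpow (t : F) : (quadraticChar F t : CyclotomicField n ℂ) ^ #{j | w j ≠ 0} =
      quadraticChar F t := by
    rw [← Int.cast_pow, ← MulChar.pow_apply' _ hw.pos.ne',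
      (quadraticChar_isQuadratic F).pow_odd hw]
  have key : (#{x | Q x = 0} * q : CyclotomicField n ℂ) = q ^ Fintype.card ι :=
    calc (#{x | Q x = 0} * q : CyclotomicField n ℂ)
        = ∑ t, ∑ x, ψ (t * Q x) := card_filter_eq_zero_mul_card_eq_sum_addChar hψ Q
      _ = ∑ x, ψ (0 * Q x) + ∑ t ∈ univ.erase 0, (quadraticChar F t : _) * ∑ x, ψ (Q x) := by
          rw [← add_sum_erase _ _ (mem_univ 0)]
          refine congrArg _ (sum_congr rfl fun t ht => ?_)
          rw [sum_addChar_mul_weightedSumSquares hF hψ w (ne_of_mem_erase ht), hpow]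
      _ = q ^ Fintype.card ι := by
          rw [← sum_mul, hsum]
          simp [q]
  have hcard : 1 ≤ Fintype.card ι := hw.pos.trans_le (card_le_univ _)
  refine Nat.eq_of_mul_eq_mul_right (Fintype.card_pos (α := F)) ?_
  rw [← pow_succ, Nat.sub_add_cancel hcard]
  exact_mod_cast key

lemma weightedSumSquares_add_eq_add_iff {R ι : Type*} [CommRing R] [NoZeroDivisors R] [Fintype ι]
    (h2 : (2 : R) ≠ 0) (w u : ι → R) :
    (∀ v, weightedSumSquares R w (u + v) = weightedSumSquares R w u + weightedSumSquares R w v) ↔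
      ∀ j, w j * u j = 0 := by
  have hexp (v : ι → R) : weightedSumSquares R w (u + v) =
      weightedSumSquares R w u + weightedSumSquares R w v + 2 * ((w * u) ⬝ᵥ v) := by
    simp only [weightedSumSquares_apply, dotProduct, mul_sum, ← sum_add_distrib,
      Pi.add_apply, Pi.mul_apply, smul_eq_mul]
    exact sum_congr rfl fun j _ => by ring
  simp only [hexp, add_eq_left, mul_eq_zero, h2, false_or, dotProduct_eq_zero_iff, funext_iff,
    Pi.mul_apply, Pi.zero_apply]

lemma card_filter_forall_mul_eq_zero {F ι : Type*} [Field F] [Fintype F] [DecidableEq F]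
    [Fintype ι] [DecidableEq ι] (w : ι → F) :
    #{u : ι → F | ∀ j, w j * u j = 0} = Fintype.card F ^ #{j | w j = 0} := by
  have : ({u : ι → F | ∀ j, w j * u j = 0} : Finset _) =
      Fintype.piFinset fun j => if w j = 0 then univ else {0} := by
    ext u
    simp only [mem_filter, mem_univ, true_and, Fintype.mem_piFinset]
    refine forall_congr' fun j => ?_
    split_ifs with hw <;> simp [hw]
  rw [this, Fintype.card_piFinset]
  simp [apply_ite, prod_ite]

lemma QuadraticMap.IsometryEquiv.card_filter_eq_zero {R M₁ M₂ N : Type*} [CommSemiring R]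
    [AddCommMonoid M₁] [AddCommMonoid M₂] [AddCommMonoid N] [Module R M₁] [Module R M₂]
    [Module R N] [Fintype M₁] [Fintype M₂] [DecidableEq N]
    {Q₁ : QuadraticMap R M₁ N} {Q₂ : QuadraticMap R M₂ N} (e : Q₁.IsometryEquiv Q₂) :
    #{x | Q₁ x = 0} = #{y | Q₂ y = 0} :=
  card_equiv e.toLinearEquiv.toEquiv fun x => by simp [e.map_app]

lemma finrank_eq_card_filter_weight_eq_zero {F V ι : Type*} [Field F] [Fintype F] [DecidableEq F]
    [AddCommGroup V] [Module F V] [Fintype ι] [DecidableEq ι] (h2 : (2 : F) ≠ 0)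
    {Q : QuadraticForm F V} {w : ι → F} (e : Q.IsometryEquiv (weightedSumSquares F w))
    (W : Submodule F V) (hW : ∀ x, x ∈ W ↔ ∀ y, Q (x + y) = Q x + Q y) :
    Module.finrank F W = #{j | w j = 0} := by
  have hmem (x : V) : x ∈ W ↔ ∀ j, w j * e x j = 0 := by
    rw [hW, ← weightedSumSquares_add_eq_add_iff h2, (EquivLike.surjective e).forall]
    simp only [← map_add e, e.map_app]
  have : Module.Finite F V := Module.Finite.equiv e.toLinearEquiv.symm
  have hcard : Nat.card W = Nat.card F ^ #{j | w j = 0} := by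
    rw [Nat.card_congr ((EquivLike.toEquiv e).subtypeEquiv (q := fun u => ∀ j, w j * u j = 0) hmem),
      Nat.card_eq_fintype_card, Fintype.card_subtype, card_filter_forall_mul_eq_zero,
      Nat.card_eq_fintype_card]
  rw [Module.natCard_eq_pow_finrank (K := F)] at hcard
  exact Nat.pow_right_injective (by rw [Nat.card_eq_fintype_card]; exact Fintype.one_lt_card) hcard

lemma QuadraticMap.ncard_setOf_ne_zero_and_ne_zero {R M N : Type*} [CommSemiring R]
    [AddCommMonoid M] [AddCommMonoid N] [Module R M] [Module R N] [Fintype M] [DecidableEq N]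
    (Q : QuadraticMap R M N) :
    {x | x ≠ 0 ∧ Q x ≠ 0}.ncard = Fintype.card M - #{x | Q x = 0} := by
  have : {x | x ≠ 0 ∧ Q x ≠ 0} = {x | Q x ≠ 0} :=
    Set.ext fun x => and_iff_right_of_imp fun hQ hx => hQ (hx ▸ Q.map_zero)
  rw [this, Set.ncard_eq_toFinset_card', Set.toFinset_ofPred, ← card_univ,
    ← card_filter_add_card_filter_not (s := univ) fun x => Q x = 0, Nat.add_sub_cancel_left]

theorem weight_of_odd_rank_quadratic_form_general (q m i : ℕ) (F : Type*) [Field F] [Fintype F]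
    (hq : Fintype.card F = q) (hodd : Odd q)
    (V : Type*) [AddCommGroup V] [Module F V]
    (hV : Module.finrank F V = m)
    (Q : QuadraticForm F V)
    (W : Submodule F V)
    (hW : ∀ x : V, x ∈ W ↔ ∀ y : V, Q (x + y) = Q x + Q y)
    (hrank : m - Module.finrank F W = i)
    (hiodd : Odd i) :
    Set.ncard {x : V | x ≠ 0 ∧ Q x ≠ 0} = q ^ (m - 1) * (q - 1) := by
  classical
  have hF : ringChar F ≠ 2 := by
    rw [Ne, FiniteField.even_card_iff_char_two, hq, ← Nat.even_iff, Nat.not_even_iff_odd]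
    exact hodd
  have : Invertible (2 : F) := invertibleOfNonzero (Ring.two_ne_zero hF)
  have hm : 0 < m := hiodd.pos.trans_le (hrank ▸ Nat.sub_le m _)
  have : Module.Finite F V := Module.finite_of_finrank_pos (hV ▸ hm)
  have : Finite V := Module.finite_of_finite F
  have : Fintype V := Fintype.ofFinite V
  obtain ⟨w, ⟨e⟩⟩ := Q.equivalent_weightedSumSquares
  have hwodd : Odd #{j | w j ≠ 0} := by
    simp only [ne_eq, ← compl_filter, card_compl]
    rwa [Fintype.card_fin,
      ← finrank_eq_card_filter_weight_eq_zero (Ring.two_ne_zero hF) e W hW, hV, hrank]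
  have hzeros : #{x | Q x = 0} = q ^ (m - 1) := by
    rw [e.card_filter_eq_zero, card_filter_weightedSumSquares_eq_zero hF w hwodd, Fintype.card_fin,
      hV, hq]
  rw [Q.ncard_setOf_ne_zero_and_ne_zero, hzeros, Module.card_eq_pow_finrank (K := F), hV, hq,
    Nat.mul_sub_one, ← pow_succ, Nat.sub_add_cancel hm]

/-- Let `q` be an odd prime power and `Q : V → F_q` a quadratic form of
odd rank `i ≥ 1` on an `m`-dimensional `F_q`-vector space `V`, where the rank of `Q` is
`m` minus the dimension of the radical of the associated symmetric bilinear form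
`B(x,y) = (Q(x+y) - Q(x) - Q(y))/2` (the radical being
`W = {x : ∀ y, Q(x+y) = Q(x) + Q(y)}`). Then the number of `x ∈ V \ {0}` with
`Q(x) ≠ 0` equals `q^{m-1}(q-1)`. -/
theorem weight_of_odd_rank_quadratic_form (q m i : ℕ) (F : Type*) [Field F] [Fintype F]
    (hq : Fintype.card F = q) (hodd : Odd q)
    (V : Type*) [AddCommGroup V] [Module F V]
    (hV : Module.finrank F V = m)
    (Q : QuadraticForm F V)
    (W : Submodule F V)
    (hW : ∀ x : V, x ∈ W ↔ ∀ y : V, Q (x + y) = Q x + Q y)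
    (hrank : m - Module.finrank F W = i)
    (hi1 : 1 ≤ i) (hiodd : Odd i) :
    Set.ncard {x : V | x ≠ 0 ∧ Q x ≠ 0} = q ^ (m - 1) * (q - 1) :=
  weight_of_odd_rank_quadratic_form_general q m i F hq hodd V hV Q W hW hrank hiodd
end
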